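/- For every x in the closed ball B̄(a,ρ): x is a minimizer of f over B̄(a,ρ) (i.e., x belongs to the median set 𝔐_μ) if and only if ‖H(x)‖ ≤ μ({x}). -/

import Mathlib

/-!
At `x`, `f` has the one-sided directional derivative `⟪u, H x⟫ + μ{x} ‖u‖` in every direction `u`
(dominated convergence: the difference quotients of `‖· - p‖` are bounded by `‖u‖`), and by
convexity of the norm this expression with `u = y - x` is also a lower bound for `f y - f x`.
Hence `‖H x‖ ≤ μ{x}` makes `x` a global minimizer. Conversely, at a minimizer inside the open
ball the derivative in the direction `-H x` is nonnegative, which is `‖H x‖ ≤ μ{x}`. A point of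
the sphere is never a minimizer: there `μ{x} = 0`, and the derivative towards the centre `a` is
`-⟪x - a, H x⟫ < 0`, because `x - p` makes an acute angle with `x - a` for every `p` in the ball.
-/

open MeasureTheory Metric Filter Set
open scoped RealInnerProductSpace Topology

theorem HasDerivWithinAt.nonneg_of_eventually_le {g : ℝ → ℝ} {g' a : ℝ}
    (hg : HasDerivWithinAt g g' (Ioi a) a) (hmin : ∀ᶠ t in 𝓝[>] a, g a ≤ g t) : 0 ≤ g' := by
  refine ge_of_tendsto ((hasDerivWithinAt_iff_tendsto_slope' self_notMem_Ioi).mp hg) ?_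
  filter_upwards [hmin, self_mem_nhdsWithin] with t hle (ht : a < t)
  rw [slope_def_field]
  exact div_nonneg (sub_nonneg.2 hle) (sub_nonneg.2 ht.le)

theorem MeasureTheory.integral_pos_of_ae_pos {α : Type*} [MeasurableSpace α] {μ : Measure α}
    [NeZero μ] {f : α → ℝ} (hfi : Integrable f μ) (hf : ∀ᵐ p ∂μ, 0 < f p) : 0 < ∫ p, f p ∂μ := by
  rw [integral_pos_iff_support_of_nonneg_ae (hf.mono fun _ hp => hp.le) hfi]
  exact pos_iff_ne_zero.2 (frequently_ae_iff.1 (hf.mono fun _ hp => hp.ne').frequently)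

theorem MeasureTheory.Integrable.norm_sub_left {E : Type*} [NormedAddCommGroup E]
    [MeasurableSpace E] [OpensMeasurableSpace E] {μ : Measure E} [IsFiniteMeasure μ] {x : E}
    (hx : Integrable (fun p => ‖x - p‖) μ) (y : E) : Integrable (fun p => ‖y - p‖) μ := by
  refine (hx.add (integrable_const ‖y - x‖)).mono'
    (continuous_const.sub continuous_id).norm.aestronglyMeasurable (ae_of_all _ fun p => ?_)
  simpa [add_comm] using norm_sub_le_norm_sub_add_norm_sub y x p

theorem integrable_norm_sub_of_ae_mem_ball {E : Type*} [NormedAddCommGroup E]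
    [MeasurableSpace E] [OpensMeasurableSpace E] {μ : Measure E} [IsFiniteMeasure μ] {a : E}
    {ρ : ℝ} (hae : ∀ᵐ p ∂μ, p ∈ ball a ρ) (x : E) : Integrable (fun p => ‖x - p‖) μ := by
  refine .of_bound (continuous_const.sub continuous_id).norm.aestronglyMeasurable (‖x - a‖ + ρ) ?_
  filter_upwards [hae] with p hp
  rw [norm_norm]
  exact (norm_sub_le_norm_sub_add_norm_sub x a p).trans
    (by gcongr; exact (mem_ball_iff_norm'.1 hp).le)

section InnerProductSpace

variable {E : Type*} [NormedAddCommGroup E] [InnerProductSpace ℝ E]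

theorem inner_inv_norm_smul_le_norm_add_sub_norm (c d : E) :
    ⟪d, ‖c‖⁻¹ • c⟫ ≤ ‖c + d‖ - ‖c‖ := by
  rcases eq_or_ne c 0 with rfl | hc
  · simp
  have hcs := real_inner_le_norm (c + d) c
  rw [inner_add_left, real_inner_self_eq_norm_sq] at hcs
  rw [real_inner_smul_right, inv_mul_le_iff₀ (norm_pos_iff.mpr hc)]
  nlinarith [real_inner_comm c d]

theorem hasDerivAt_norm_add_smul {c : E} (hc : c ≠ 0) (u : E) :
    HasDerivAt (fun t : ℝ => ‖c + t • u‖) ⟪u, ‖c‖⁻¹ • c⟫ 0 := by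
  have hsq : HasDerivAt (fun t : ℝ => ‖c + t • u‖ ^ 2) (2 * ⟪c, u⟫) 0 := by
    simpa using (((hasDerivAt_id (0 : ℝ)).smul_const u).const_add c).norm_sq
  have hsqrt := hsq.sqrt (by simpa using hc)
  simp only [Real.sqrt_sq (norm_nonneg _), zero_smul, add_zero] at hsqrt
  convert hsqrt using 1
  rw [real_inner_smul_right, real_inner_comm]
  field_simp

theorem norm_inv_norm_smul_le_one (v : E) : ‖‖v‖⁻¹ • v‖ ≤ 1 := by
  rcases eq_or_ne v 0 with rfl | hv
  · simp
  · exact (norm_smul_inv_norm hv).le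

theorem inner_sub_pos_of_mem_ball_of_notMem_ball {a x p : E} {ρ : ℝ} (hp : p ∈ ball a ρ)
    (hx : x ∉ ball a ρ) : 0 < ⟪x - a, x - p⟫ := by
  rw [mem_ball_iff_norm] at hp
  rw [mem_ball_iff_norm, not_lt] at hx
  have hcs := real_inner_le_norm (x - a) (p - a)
  rw [show x - p = (x - a) - (p - a) by abel, inner_sub_right, real_inner_self_eq_norm_sq]
  nlinarith [norm_nonneg (p - a)]

/-- The one-sided derivative of `y ↦ ‖y - p‖` at `x` in direction `u`; for `p = x` the inner
product term vanishes because `‖0‖⁻¹ • 0 = 0`. -/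
noncomputable def normSubDirDeriv (x p u : E) : ℝ :=
  ⟪u, ‖x - p‖⁻¹ • (x - p)⟫ + ({x} : Set E).indicator (fun _ => ‖u‖) p

theorem tendsto_norm_add_smul_sub_div (x p u : E) :
    Tendsto (fun t : ℝ => (‖x + t • u - p‖ - ‖x - p‖) / t) (𝓝[>] 0)
      (𝓝 (normSubDirDeriv x p u)) := by
  rcases eq_or_ne p x with rfl | hp
  · rw [show normSubDirDeriv p p u = ‖u‖ by simp [normSubDirDeriv]]
    refine tendsto_const_nhds.congr' ?_
    filter_upwards [self_mem_nhdsWithin] with t (ht : 0 < t)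
    rw [add_sub_cancel_left, sub_self, norm_zero, sub_zero, norm_smul,
      Real.norm_of_nonneg ht.le, mul_div_cancel_left₀ _ ht.ne']
  · rw [normSubDirDeriv, indicator_of_notMem (show p ∉ ({x} : Set E) from hp), add_zero]
    refine (hasDerivAt_norm_add_smul (sub_ne_zero.2 hp.symm) u).tendsto_slope_zero_right.congr
      fun t => ?_
    rw [zero_add, zero_smul, add_zero, smul_eq_mul, div_eq_inv_mul, sub_add_eq_add_sub]

theorem normSubDirDeriv_sub_le (x p y : E) :
    normSubDirDeriv x p (y - x) ≤ ‖y - p‖ - ‖x - p‖ := by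
  rcases eq_or_ne p x with rfl | hp
  · simp [normSubDirDeriv]
  · rw [normSubDirDeriv, indicator_of_notMem (show p ∉ ({x} : Set E) from hp), add_zero]
    simpa using inner_inv_norm_smul_le_norm_add_sub_norm (x - p) (y - x)

variable [MeasurableSpace E] [BorelSpace E] [SecondCountableTopology E]
  {μ : Measure E} [IsFiniteMeasure μ] {x : E}

theorem integrable_inv_norm_smul_sub (x : E) :
    Integrable (fun p => ‖x - p‖⁻¹ • (x - p)) μ := by
  have hsub : Continuous fun p : E => x - p := continuous_const.sub continuous_id
  refine (integrable_const (1 : ℝ)).mono' ?_ (ae_of_all _ fun p => norm_inv_norm_smul_le_one _)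
  exact (hsub.norm.measurable.inv.aestronglyMeasurable).smul hsub.aestronglyMeasurable

theorem integrable_normSubDirDeriv (x u : E) : Integrable (fun p => normSubDirDeriv x p u) μ :=
  ((integrable_inv_norm_smul_sub x).const_inner u).add
    ((integrable_const _).indicator (measurableSet_singleton x))

variable [CompleteSpace E]

theorem integral_normSubDirDeriv (x u : E) :
    ∫ p, normSubDirDeriv x p u ∂μ = ⟪u, ∫ p, ‖x - p‖⁻¹ • (x - p) ∂μ⟫ + μ.real {x} * ‖u‖ := by
  rw [← integral_inner (integrable_inv_norm_smul_sub x), ← smul_eq_mul,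
    ← integral_indicator_const _ (measurableSet_singleton x)]
  exact integral_add ((integrable_inv_norm_smul_sub x).const_inner u)
    ((integrable_const _).indicator (measurableSet_singleton x))

theorem hasDerivWithinAt_integral_norm_add_smul_sub (hx : Integrable (fun p => ‖x - p‖) μ)
    (u : E) :
    HasDerivWithinAt (fun t : ℝ => ∫ p, ‖x + t • u - p‖ ∂μ)
      (⟪u, ∫ p, ‖x - p‖⁻¹ • (x - p) ∂μ⟫ + μ.real {x} * ‖u‖) (Ioi 0) 0 := by
  rw [hasDerivWithinAt_iff_tendsto_slope' self_notMem_Ioi, ← integral_normSubDirDeriv]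
  have hslope : slope (fun t : ℝ => ∫ p, ‖x + t • u - p‖ ∂μ) 0
      = fun t => ∫ p, (‖x + t • u - p‖ - ‖x - p‖) / t ∂μ := by
    ext t
    rw [slope_def_field, integral_div, integral_sub (hx.norm_sub_left _) hx]
    simp
  rw [hslope]
  refine tendsto_integral_filter_of_dominated_convergence (fun _ => ‖u‖) ?_ ?_
    (integrable_const _) (ae_of_all _ fun p => tendsto_norm_add_smul_sub_div x p u)
  · exact Eventually.of_forall fun t =>
      (((continuous_const.sub continuous_id).norm.sub
        (continuous_const.sub continuous_id).norm).div_const t).aestronglyMeasurable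
  · filter_upwards [self_mem_nhdsWithin] with t (ht : 0 < t)
    refine ae_of_all _ fun p => ?_
    rw [norm_div, Real.norm_eq_abs, Real.norm_eq_abs, abs_of_pos ht, div_le_iff₀ ht]
    calc |‖x + t • u - p‖ - ‖x - p‖| ≤ ‖(x + t • u - p) - (x - p)‖ := abs_norm_sub_norm_le _ _
      _ = ‖u‖ * t := by
        rw [sub_sub_sub_cancel_right, add_sub_cancel_left, norm_smul, Real.norm_of_nonneg ht.le,
          mul_comm]

theorem inner_integral_add_measureReal_mul_norm_le (hx : Integrable (fun p => ‖x - p‖) μ)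
    (y : E) :
    ⟪y - x, ∫ p, ‖x - p‖⁻¹ • (x - p) ∂μ⟫ + μ.real {x} * ‖y - x‖
      ≤ ∫ p, ‖y - p‖ ∂μ - ∫ p, ‖x - p‖ ∂μ := by
  rw [← integral_normSubDirDeriv, ← integral_sub (hx.norm_sub_left y) hx]
  exact integral_mono (integrable_normSubDirDeriv x _) ((hx.norm_sub_left y).sub hx)
    fun p => normSubDirDeriv_sub_le x p y

theorem inner_integral_add_measureReal_mul_norm_nonneg {s : Set E}
    (hx : Integrable (fun p => ‖x - p‖) μ) (hmin : IsMinOn (fun y => ∫ p, ‖y - p‖ ∂μ) s x)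
    {u : E} (hu : ∀ᶠ t : ℝ in 𝓝[>] 0, x + t • u ∈ s) :
    0 ≤ ⟪u, ∫ p, ‖x - p‖⁻¹ • (x - p) ∂μ⟫ + μ.real {x} * ‖u‖ :=
  (hasDerivWithinAt_integral_norm_add_smul_sub hx u).nonneg_of_eventually_le
    (by filter_upwards [hu] with t ht; simpa using hmin ht)

theorem norm_integral_le_measureReal_of_isMinOn {s : Set E}
    (hx : Integrable (fun p => ‖x - p‖) μ) (hmin : IsMinOn (fun y => ∫ p, ‖y - p‖ ∂μ) s x)
    (hs : s ∈ 𝓝 x) : ‖∫ p, ‖x - p‖⁻¹ • (x - p) ∂μ‖ ≤ μ.real {x} := by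
  set h := ∫ p, ‖x - p‖⁻¹ • (x - p) ∂μ
  have hline : Tendsto (fun t : ℝ => x + t • -h) (𝓝 0) (𝓝 x) :=
    (continuous_const.add (continuous_id.smul continuous_const)).tendsto' 0 x (by simp)
  have hderiv : 0 ≤ ⟪-h, h⟫ + μ.real {x} * ‖-h‖ :=
    inner_integral_add_measureReal_mul_norm_nonneg hx hmin
      ((hline.eventually hs).filter_mono nhdsWithin_le_nhds)
  rw [inner_neg_left, real_inner_self_eq_norm_sq, norm_neg] at hderiv
  nlinarith [norm_nonneg h, measureReal_nonneg (μ := μ) (s := {x})]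

theorem not_isMinOn_closedBall_of_notMem_ball [NeZero μ] {a : E} {ρ : ℝ}
    (hae : ∀ᵐ p ∂μ, p ∈ ball a ρ) (hx : x ∈ closedBall a ρ) (hxb : x ∉ ball a ρ) :
    ¬ IsMinOn (fun y => ∫ p, ‖y - p‖ ∂μ) (closedBall a ρ) x := by
  intro hmin
  have hint : Integrable (fun p => ‖x - p‖) μ := integrable_norm_sub_of_ae_mem_ball hae x
  have hμx : μ.real {x} = 0 := (measureReal_eq_zero_iff (measure_ne_top _ _)).2
    (measure_mono_null (by simpa using hxb) (ae_iff.1 hae))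
  have hsegment : ∀ᶠ t : ℝ in 𝓝[>] 0, x + t • (a - x) ∈ closedBall a ρ := by
    filter_upwards [Ioo_mem_nhdsGT one_pos] with t ht
    exact (convex_closedBall a ρ).add_smul_sub_mem hx
      (mem_closedBall_self (dist_nonneg.trans hx)) ⟨ht.1.le, ht.2.le⟩
  have hderiv := inner_integral_add_measureReal_mul_norm_nonneg hint hmin hsegment
  have hpos : 0 < ⟪x - a, ∫ p, ‖x - p‖⁻¹ • (x - p) ∂μ⟫ := by
    rw [← integral_inner (integrable_inv_norm_smul_sub x)]
    refine integral_pos_of_ae_pos ((integrable_inv_norm_smul_sub x).const_inner _) ?_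
    filter_upwards [hae] with p hp
    have hpx : x - p ≠ 0 := sub_ne_zero.2 fun h => hxb (h ▸ hp)
    rw [real_inner_smul_right]
    exact mul_pos (inv_pos.2 (norm_pos_iff.2 hpx))
      (inner_sub_pos_of_mem_ball_of_notMem_ball hp hxb)
  rw [hμx, zero_mul, add_zero, ← neg_sub, inner_neg_left] at hderiv
  linarith

theorem isMinOn_integral_norm_sub (hx : Integrable (fun p => ‖x - p‖) μ)
    (hle : ‖∫ p, ‖x - p‖⁻¹ • (x - p) ∂μ‖ ≤ μ.real {x}) (s : Set E) :
    IsMinOn (fun y => ∫ p, ‖y - p‖ ∂μ) s x := by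
  refine isMinOn_iff.2 fun y _ => sub_nonneg.1 ?_
  have hsub := inner_integral_add_measureReal_mul_norm_le hx y
  have hcs := neg_le_of_abs_le (abs_real_inner_le_norm (y - x) (∫ p, ‖x - p‖⁻¹ • (x - p) ∂μ))
  nlinarith [mul_le_mul_of_nonneg_left hle (norm_nonneg (y - x))]

end InnerProductSpace

theorem stmt3_general {n : ℕ} (a : EuclideanSpace ℝ (Fin n)) (ρ : ℝ)
    (μ : Measure (EuclideanSpace ℝ (Fin n))) [IsProbabilityMeasure μ]
    (hsupp : {x : EuclideanSpace ℝ (Fin n) | ∀ U ∈ nhds x, 0 < μ U} ⊆ ball a ρ)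
    (f : EuclideanSpace ℝ (Fin n) → ℝ)
    (hf : ∀ x, f x = ∫ p, ‖x - p‖ ∂μ)
    (H : EuclideanSpace ℝ (Fin n) → EuclideanSpace ℝ (Fin n))
    (hH : ∀ x, H x = ∫ p in ({x}ᶜ : Set (EuclideanSpace ℝ (Fin n))), ‖x - p‖⁻¹ • (x - p) ∂μ)
    (x : EuclideanSpace ℝ (Fin n)) (hx : x ∈ closedBall a ρ) :
    IsMinOn f (closedBall a ρ) x ↔ ‖H x‖ ≤ (μ {x}).toReal := by
  obtain rfl : f = fun y => ∫ p, ‖y - p‖ ∂μ := funext hf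
  rw [hH, setIntegral_eq_integral_of_forall_compl_eq_zero (by simp), ← measureReal_def]
  have hae : ∀ᵐ p ∂μ, p ∈ ball a ρ := mem_of_superset Measure.support_mem_ae
    fun p hp => hsupp ((Measure.mem_support_iff_forall p).1 hp)
  have hint := integrable_norm_sub_of_ae_mem_ball hae x
  refine ⟨fun hmin => ?_, fun hle => isMinOn_integral_norm_sub hint hle _⟩
  by_cases hxb : x ∈ ball a ρ
  · exact norm_integral_le_measureReal_of_isMinOn hint hmin
      (mem_of_superset (isOpen_ball.mem_nhds hxb) ball_subset_closedBall)
  · exact absurd hmin (not_isMinOn_closedBall_of_notMem_ball hae hx hxb)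

/-- Euclidean case of Theorem 2.5, characterization of the median.
For `x ∈ B̄(a,ρ)`: `x` minimizes `f` over `B̄(a,ρ)` iff `‖H x‖ ≤ μ{x}`. -/
theorem stmt3 {n : ℕ} (hn : 1 ≤ n) (a : EuclideanSpace ℝ (Fin n)) (ρ : ℝ) (hρ : 0 < ρ)
    (μ : Measure (EuclideanSpace ℝ (Fin n))) [IsProbabilityMeasure μ]
    (hsupp : {x : EuclideanSpace ℝ (Fin n) | ∀ U ∈ nhds x, 0 < μ U} ⊆ ball a ρ)
    (f : EuclideanSpace ℝ (Fin n) → ℝ)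
    (hf : ∀ x, f x = ∫ p, ‖x - p‖ ∂μ)
    (H : EuclideanSpace ℝ (Fin n) → EuclideanSpace ℝ (Fin n))
    (hH : ∀ x, H x = ∫ p in ({x}ᶜ : Set (EuclideanSpace ℝ (Fin n))), ‖x - p‖⁻¹ • (x - p) ∂μ)
    (x : EuclideanSpace ℝ (Fin n)) (hx : x ∈ closedBall a ρ) :
    IsMinOn f (closedBall a ρ) x ↔ ‖H x‖ ≤ (μ {x}).toReal :=
  stmt3_general a ρ μ hsupp f hf H hH x hx
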